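/- arXiv:2405.06912 — 3 statements merged into one kernel-verified Lean document; each statement's English description precedes it below -/
import Mathlib

section
/- For 0 < i < n, the intersection of the generalized horn Λ^n_{{1,...,i}} with the face Δ^{[n]-{i}} of Δ^n equals the generalized horn Λ^{[n]-{i}}_{{1,...,i-1}}, as subcomplexes of Δ^n. -/
/-- A nonempty subset `S` of the vertex set spans a simplex of the generalized horn
`Λ^I_J` iff `S ⊆ I` and `S` omits some vertex `k ∈ I - J`. Subcomplexes of a simplex are
determined by the family of vertex sets of their simplices. -/
def hornMem {α : Type*} [DecidableEq α] (I J S : Finset α) : Prop :=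
  S ⊆ I ∧ ∃ k ∈ I \ J, k ∉ S

theorem hornMem_and_subset_sdiff_singleton_iff {α : Type*} [DecidableEq α]
    {I J S : Finset α} {a : α} (ha : a ∈ J) :
    hornMem I J S ∧ S ⊆ I \ {a} ↔ hornMem (I \ {a}) (J \ {a}) S := by
  have hIJ : (I \ {a}) \ (J \ {a}) = I \ J := by
    ext k
    by_cases hk : k = a <;> simp [hk, ha]
  rw [hornMem, hornMem, hIJ]
  exact ⟨fun ⟨⟨_, hk⟩, hS⟩ => ⟨hS, hk⟩,
    fun ⟨hS, hk⟩ => ⟨⟨hS.trans Finset.sdiff_subset, hk⟩, hS⟩⟩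

/-- For `0 < i < n`, the intersection of the generalized horn `Λ^n_{{1,…,i}}` with the
face `Δ^{[n]-{i}}` of `Δ^n` equals the generalized horn `Λ^{[n]-{i}}_{{1,…,i-1}}`, as
subcomplexes of `Δ^n` (stated as an equality of the families of vertex sets of simplices). -/
theorem horn_inter_face (n i : ℕ) (h0 : 0 < i) (hn : i < n)
    (S : Finset (Fin (n + 1))) :
    (hornMem Finset.univ
        (Finset.univ.filter fun k : Fin (n + 1) => 1 ≤ (k : ℕ) ∧ (k : ℕ) ≤ i) S ∧
      S ⊆ Finset.univ \ {(⟨i, by omega⟩ : Fin (n + 1))}) ↔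
    hornMem (Finset.univ \ {(⟨i, by omega⟩ : Fin (n + 1))})
      (Finset.univ.filter fun k : Fin (n + 1) => 1 ≤ (k : ℕ) ∧ (k : ℕ) ≤ i - 1) S := by
  have hi : (⟨i, by omega⟩ : Fin (n + 1)) ∈
      Finset.univ.filter fun k : Fin (n + 1) => 1 ≤ (k : ℕ) ∧ (k : ℕ) ≤ i := by
    simp only [Finset.mem_filter, Finset.mem_univ, true_and]
    omega
  have hJ : (Finset.univ.filter fun k : Fin (n + 1) => 1 ≤ (k : ℕ) ∧ (k : ℕ) ≤ i - 1) =
      (Finset.univ.filter fun k : Fin (n + 1) => 1 ≤ (k : ℕ) ∧ (k : ℕ) ≤ i) \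
        {(⟨i, by omega⟩ : Fin (n + 1))} := by
    ext k
    simp only [Finset.mem_filter, Finset.mem_univ, true_and, Finset.mem_sdiff,
      Finset.mem_singleton, Fin.ext_iff]
    omega
  rw [hJ]
  exact hornMem_and_subset_sdiff_singleton_iff hi
end

section
/- For 0 ≤ i < n-1, the intersection of the subcomplex s(i+1,n) = Δ^{{0,...,n-1}} ∪ Δ^{{i+1,...,n}} of Δ^n with the face Δ^{{i,...,n}} equals the generalized horn Λ^{{i,...,n}}_{{i+1,...,n-1}}. -/
open Finset

theorem hornMem_iff {α : Type*} [DecidableEq α] {I J S : Finset α} :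
    hornMem I J S ↔ S ⊆ I ∧ ¬ I \ J ⊆ S := by
  rw [hornMem, not_subset]

theorem subset_filter_iff_notMem {α : Type*} [Fintype α] {S T : Finset α}
    {p : α → Prop} [DecidablePred p] {a : α} (hST : S ⊆ T) (hp : ∀ v ∈ T, p v ↔ v ≠ a) :
    S ⊆ univ.filter p ↔ a ∉ S := by
  simp only [subset_iff, mem_filter, mem_univ, true_and]
  exact ⟨fun h ha => (hp a (hST ha)).1 (h ha) rfl,
    fun ha v hv => (hp v (hST hv)).2 fun hva => ha (hva ▸ hv)⟩

theorem Fin.filter_le_sdiff_filter_between {n i : ℕ} (hi : i ≤ n) :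
    univ.filter (fun v : Fin (n + 1) => i ≤ (v : ℕ)) \
        univ.filter (fun v : Fin (n + 1) => i + 1 ≤ (v : ℕ) ∧ (v : ℕ) < n) =
      {⟨i, by omega⟩, Fin.last n} := by
  ext v
  simp only [mem_sdiff, mem_filter, mem_univ, true_and, mem_insert, mem_singleton, Fin.ext_iff,
    Fin.val_last]
  omega

theorem s_inter_face_general (n i : ℕ) (hi : i < n - 1)
    (S : Finset (Fin (n + 1))) :
    ((S ⊆ Finset.univ.filter (fun v : Fin (n + 1) => (v : ℕ) < n) ∨
        S ⊆ Finset.univ.filter (fun v : Fin (n + 1) => i + 1 ≤ (v : ℕ))) ∧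
      S ⊆ Finset.univ.filter (fun v : Fin (n + 1) => i ≤ (v : ℕ))) ↔
    hornMem (Finset.univ.filter (fun v : Fin (n + 1) => i ≤ (v : ℕ)))
      (Finset.univ.filter (fun v : Fin (n + 1) => i + 1 ≤ (v : ℕ) ∧ (v : ℕ) < n)) S := by
  rw [hornMem_iff, Fin.filter_le_sdiff_filter_between (by omega), insert_subset_iff,
    singleton_subset_iff, and_comm]
  refine and_congr_right fun hSI => ?_
  have hmissing_n : S ⊆ univ.filter (fun v : Fin (n + 1) => (v : ℕ) < n) ↔ Fin.last n ∉ S :=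
    subset_filter_iff_notMem hSI fun v _ => by rw [Ne, Fin.ext_iff, Fin.val_last]; omega
  have hmissing_i : S ⊆ univ.filter (fun v : Fin (n + 1) => i + 1 ≤ (v : ℕ)) ↔
      ⟨i, by omega⟩ ∉ S :=
    subset_filter_iff_notMem hSI fun v hv => by
      rw [mem_filter] at hv; rw [Ne, Fin.ext_iff]; dsimp only; omega
  rw [hmissing_n, hmissing_i, not_and_or, or_comm]

/-- For `0 ≤ i < n - 1`, the intersection of the subcomplex
`s(i+1,n) = Δ^{{0,…,n-1}} ∪ Δ^{{i+1,…,n}}` of `Δ^n` with the face `Δ^{{i,…,n}}` equals the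
generalized horn `Λ^{{i,…,n}}_{{i+1,…,n-1}}` (as families of vertex sets of simplices). -/
theorem s_inter_face (n i : ℕ) (hi : i < n - 1)
    (S : Finset (Fin (n + 1))) (hS : S.Nonempty) :
    ((S ⊆ Finset.univ.filter (fun v : Fin (n + 1) => (v : ℕ) < n) ∨
        S ⊆ Finset.univ.filter (fun v : Fin (n + 1) => i + 1 ≤ (v : ℕ))) ∧
      S ⊆ Finset.univ.filter (fun v : Fin (n + 1) => i ≤ (v : ℕ))) ↔
    hornMem (Finset.univ.filter (fun v : Fin (n + 1) => i ≤ (v : ℕ)))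
      (Finset.univ.filter (fun v : Fin (n + 1) => i + 1 ≤ (v : ℕ) ∧ (v : ℕ) < n)) S :=
  s_inter_face_general n i hi S
end

section
/- Let Q(•) be the cosimplicial simplicial set with Q(n) = Δ^n ⋆ Δ^{n,op} ≅ Δ^{2n+1} and cosimplicial structure induced by [n] ↦ [n]⋆[n]^op. Then Q(•) is Reedy cofibrant: for each n, the n-th latching map L_n Q(•) → Q(n) is a monomorphism, and its image is the subcomplex ⋃_{i=0}^{n} Δ^{([n]-{i}) ⋆ ([n]-{i})^{op}} of Q(n). -/
/-!
On vertices, the coface `d^i : Q(n-1) → Q(n)` is a strictly monotone map `[2n-1] → [2n+1]`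
whose image misses exactly the two vertices `0i` and `1i`. A strictly monotone map is
injective, and a monotone simplex factors through it as soon as its vertices lie in the
image, because the factorization is then automatically monotone.
-/

/-- The coface map `d^i : Q(n-1) → Q(n)` on vertices, where the vertices of
`Q(m) = Δ^{[m]⋆[m]^op}` are identified with `Fin (2m+2)` via `0j ↦ j`, `1j ↦ 2m+1-j`.
It sends `0j ↦ 0 δᵢ(j)` and `1j ↦ 1 δᵢ(j)`. -/
def dJoin (n i : ℕ) (v : Fin (2 * n)) : Fin (2 * n + 2) :=
  if (v : ℕ) < n then
    (if (v : ℕ) < i then ⟨(v : ℕ), by have := v.isLt; omega⟩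
     else ⟨(v : ℕ) + 1, by have := v.isLt; omega⟩)
  else
    (if 2 * n - 1 - (v : ℕ) < i then ⟨2 * n + 1 - (2 * n - 1 - (v : ℕ)), by omega⟩
     else ⟨2 * n - (2 * n - 1 - (v : ℕ)), by omega⟩)

theorem StrictMono.exists_monotone_comp_eq_iff {α β γ : Type*} [Preorder α] [LinearOrder β]
    [Preorder γ] {f : β → γ} (hf : StrictMono f) {x : α → γ} (hx : Monotone x) :
    (∃ y : α → β, Monotone y ∧ x = f ∘ y) ↔ ∀ a, x a ∈ Set.range f := by
  constructor
  · rintro ⟨y, -, rfl⟩ a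
    exact ⟨y a, rfl⟩
  · intro hrange
    choose y hy using hrange
    refine ⟨y, fun a b hab => ?_, funext fun a => (hy a).symm⟩
    rw [← hf.le_iff_le, hy, hy]
    exact hx hab

lemma dJoin_val (n i : ℕ) (v : Fin (2 * n)) :
    (dJoin n i v : ℕ) =
      if (v : ℕ) < n then (if (v : ℕ) < i then (v : ℕ) else (v : ℕ) + 1)
      else (if 2 * n - 1 - (v : ℕ) < i then 2 * n + 1 - (2 * n - 1 - (v : ℕ))
            else 2 * n - (2 * n - 1 - (v : ℕ))) := by
  unfold dJoin
  split_ifs <;> rfl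

lemma dJoin_strictMono (n i : ℕ) : StrictMono (dJoin n i) := by
  intro a b hab
  rw [Fin.lt_def] at hab ⊢
  rw [dJoin_val, dJoin_val]
  split_ifs <;> omega

lemma mem_range_dJoin_iff {n i : ℕ} (hi : i ≤ n) (u : Fin (2 * n + 2)) :
    u ∈ Set.range (dJoin n i) ↔ (u : ℕ) ≠ i ∧ (u : ℕ) ≠ 2 * n + 1 - i := by
  constructor
  · rintro ⟨v, rfl⟩
    rw [dJoin_val]
    split_ifs <;> omega
  · rintro ⟨hui, hui'⟩
    have hu := u.isLt
    set w := if (u : ℕ) < i then (u : ℕ) else if (u : ℕ) ≤ 2 * n + 1 - i then u - 1 else u - 2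
      with hw
    have hw_lt : w < 2 * n := by
      rw [hw]
      split_ifs <;> omega
    refine ⟨⟨w, hw_lt⟩, Fin.ext ?_⟩
    rw [dJoin_val, Fin.val_mk, hw]
    split_ifs <;> omega

theorem Q_reedy_cofibrant_general (n : ℕ) :
    (∀ i ≤ n, Function.Injective (dJoin n i)) ∧
    ∀ (m : ℕ) (x : Fin (m + 1) → Fin (2 * n + 2)), Monotone x →
      ((∃ i ≤ n, ∃ y : Fin (m + 1) → Fin (2 * n), Monotone y ∧ x = dJoin n i ∘ y) ↔
        ∃ i ≤ n, ∀ k, (x k : ℕ) ≠ i ∧ (x k : ℕ) ≠ 2 * n + 1 - i) := by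
  refine ⟨fun i _ => (dJoin_strictMono n i).injective, fun m x hx => ?_⟩
  refine exists_congr fun i => and_congr_right fun hi => ?_
  rw [(dJoin_strictMono n i).exists_monotone_comp_eq_iff hx]
  exact forall_congr' fun k => mem_range_dJoin_iff hi (x k)

/-- The cosimplicial simplicial set `Q(•)`, `Q(n) = Δ^n ⋆ Δ^{n,op} ≅ Δ^{2n+1}`, is Reedy
cofibrant: each coface `d^i : Q(n-1) → Q(n)` is injective on simplices, and a (monotone)
simplex of `Q(n)` lies in the latching subcomplex, i.e. factors through some coface,
iff it lies in one of the faces `Δ^{([n]-{i}) ⋆ ([n]-{i})^op}`, i.e. its vertices avoid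
the pair `{0i, 1i}` for some `i`; hence the latching map is a monomorphism with image
`⋃_{i=0}^{n} Δ^{([n]-{i}) ⋆ ([n]-{i})^op}`. -/
theorem Q_reedy_cofibrant (n : ℕ) (hn : 1 ≤ n) :
    (∀ i ≤ n, Function.Injective (dJoin n i)) ∧
    ∀ (m : ℕ) (x : Fin (m + 1) → Fin (2 * n + 2)), Monotone x →
      ((∃ i ≤ n, ∃ y : Fin (m + 1) → Fin (2 * n), Monotone y ∧ x = dJoin n i ∘ y) ↔
        ∃ i ≤ n, ∀ k, (x k : ℕ) ≠ i ∧ (x k : ℕ) ≠ 2 * n + 1 - i) :=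
  Q_reedy_cofibrant_general n
end
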